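/- arXiv:1509.03331 — 5 statements merged into one kernel-verified Lean document; each statement's English description precedes it below -/
import Mathlib

section
/- Let X, Y, Z be Banach spaces, x₀ ∈ X, y₀ ∈ Y, ρ, η > 0, and let Φ : B(x₀,ρ) × B(y₀,η) → Z be continuous in x and continuously (Fréchet) differentiable in y, with Φ(x₀,y₀) = 0. Suppose L₀ := D_yΦ(x₀,y₀) has a bounded inverse, and that: (i) ‖L₀ − D_yΦ(x,y)‖ ≤ (1/3)‖L₀⁻¹‖⁻¹ for all x ∈ B(x₀,ρ), y ∈ B(y₀,η); (ii) ‖Φ(x,y₀)‖ ≤ (η/3)‖L₀⁻¹‖⁻¹ for all x ∈ B(x₀,ρ). Then there exists a continuous map y : B(x₀,ρ) → B(y₀,η) such that for every x ∈ B(x₀,ρ), y(x) is the unique solution in B(y₀,η) of the equation Φ(x, y(x)) = 0. -/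
/-!
For fixed `x`, the chord map `T_x y = y - L₀⁻¹ Φ(x, y)` has derivative `L₀⁻¹ (L₀ - D_yΦ(x, y))`,
of norm at most `1/3` by (i), so `T_x` is a `1/3`-contraction of `B(y₀, η)`. By (ii) it moves `y₀`
by at most `η/3`, hence maps the closed ball of radius `η/2` into itself, and Banach's fixed point
theorem yields the zero `y(x)` of `Φ(x, ·)`, unique in `B(y₀, η)`. Since the contraction constant is
uniform in `x`, `dist (y x) (y x') ≤ (3/2) dist (T_x (y x')) (T_x' (y x'))`, which tends to `0` as
`x → x'` by continuity of `Φ` in `x`.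
-/

open Metric Set Filter Topology Function NNReal

section FixedPoint

variable {Y : Type*} [MetricSpace Y] {g : Y → Y} {K : ℝ≥0} {s : Set Y}

theorem LipschitzOnWith.dist_le_of_isFixedPt (hg : LipschitzOnWith K g s) (hK : K < 1)
    {x y : Y} (hx : x ∈ s) (hy : y ∈ s) (hfix : IsFixedPt g y) :
    dist x y ≤ dist x (g x) / (1 - K) := by
  rw [le_div_iff₀ (sub_pos.2 (by exact_mod_cast hK))]
  have := calc
    dist x y ≤ dist x (g x) + dist (g x) (g y) := by rw [hfix.eq]; exact dist_triangle _ _ _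
    _ ≤ dist x (g x) + K * dist x y := by gcongr; exact hg.dist_le_mul x hx y hy
  linarith

theorem LipschitzOnWith.eq_of_isFixedPt (hg : LipschitzOnWith K g s) (hK : K < 1)
    {x y : Y} (hx : x ∈ s) (hy : y ∈ s) (hfx : IsFixedPt g x) (hfy : IsFixedPt g y) : x = y := by
  have := hg.dist_le_of_isFixedPt hK hx hy hfy
  rwa [hfx.eq, dist_self, zero_div, dist_le_zero] at this

theorem LipschitzOnWith.mapsTo_closedBall {c : Y} {r : ℝ}
    (hg : LipschitzOnWith K g (closedBall c r)) (hc : dist (g c) c ≤ (1 - K) * r) :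
    MapsTo g (closedBall c r) (closedBall c r) := fun y hy => by
  have hr : 0 ≤ r := dist_nonneg.trans hy
  rw [mem_closedBall] at hy ⊢
  calc dist (g y) c ≤ dist (g y) (g c) + dist (g c) c := dist_triangle _ _ _
    _ ≤ K * r + (1 - K) * r := by
        gcongr
        exact (hg.dist_le_mul y (mem_closedBall.2 hy) c (mem_closedBall_self hr)).trans
          (by gcongr)
    _ = r := by ring

theorem LipschitzOnWith.exists_isFixedPt (hg : LipschitzOnWith K g s) (hK : K < 1)
    (hs : IsComplete s) (hne : s.Nonempty) (hmaps : MapsTo g s s) : ∃ y ∈ s, IsFixedPt g y := by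
  obtain ⟨x, hx⟩ := hne
  obtain ⟨y, hys, hfix, -⟩ := ContractingWith.exists_fixedPoint' hs hmaps
    ⟨hK, hmaps.lipschitzOnWith_iff_restrict.mp hg⟩ hx (edist_ne_top _ _)
  exact ⟨y, hys, hfix⟩

theorem exists_continuousOn_isFixedPt_of_lipschitzOnWith {P : Type*} [TopologicalSpace P]
    {U : Set P} {g : P → Y → Y} (hK : K < 1) (hs : IsComplete s) (hne : s.Nonempty)
    (hmaps : ∀ p ∈ U, MapsTo (g p) s s) (hlip : ∀ p ∈ U, LipschitzOnWith K (g p) s)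
    (hcont : ∀ y ∈ s, ContinuousOn (fun p => g p y) U) :
    ∃ f : P → Y, ContinuousOn f U ∧ ∀ p ∈ U, f p ∈ s ∧ IsFixedPt (g p) (f p) := by
  have := hne.to_type
  choose! f hfs hfix using fun p hp => (hlip p hp).exists_isFixedPt hK hs hne (hmaps p hp)
  refine ⟨f, fun p₀ hp₀ => ?_, fun p hp => ⟨hfs p hp, hfix p hp⟩⟩
  have hbound : ∀ p ∈ U, dist (f p) (f p₀) ≤ dist (g p₀ (f p₀)) (g p (f p₀)) / (1 - K) := by
    intro p hp
    rw [dist_comm, (hfix p₀ hp₀).eq]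
    exact (hlip p hp).dist_le_of_isFixedPt hK (hfs p₀ hp₀) (hfs p hp) (hfix p hp)
  have hlim : Tendsto (fun p => dist (g p₀ (f p₀)) (g p (f p₀)) / (1 - K)) (𝓝[U] p₀) (𝓝 0) := by
    simpa using ((tendsto_const_nhds (x := g p₀ (f p₀))).dist
      (hcont _ (hfs p₀ hp₀) p₀ hp₀)).div_const (1 - (K : ℝ))
  rw [ContinuousWithinAt, tendsto_iff_dist_tendsto_zero]
  exact squeeze_zero' (Eventually.of_forall fun _ => dist_nonneg)
    (eventually_nhdsWithin_of_forall hbound) hlim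

end FixedPoint

section ChordMap

variable {Y Z : Type*} [NormedAddCommGroup Y] [NormedSpace ℝ Y] [NormedAddCommGroup Z]
  [NormedSpace ℝ Z] {A : Z →L[ℝ] Y} {f : Y → Z}

/-- The chord (simplified Newton) iteration for `f y = 0`, with `A` a fixed approximate inverse
of the derivative of `f`. -/
def chordMap (A : Z →L[ℝ] Y) (f : Y → Z) (y : Y) : Y := y - A (f y)

theorem isFixedPt_chordMap_iff (hA : Injective A) {y : Y} :
    IsFixedPt (chordMap A f) y ↔ f y = 0 := by
  simp [IsFixedPt, chordMap, map_eq_zero_iff A hA]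

theorem dist_chordMap_self_le {y : Y} {c : ℝ} (hc : 0 ≤ c) (hf : ‖f y‖ ≤ c * ‖A‖⁻¹) :
    dist (chordMap A f y) y ≤ c := by
  rw [dist_eq_norm, chordMap, sub_sub_cancel_left, norm_neg]
  exact (A.le_opNorm _).trans (by rw [mul_comm]; exact mul_le_of_le_mul_inv₀ hc (norm_nonneg _) hf)

theorem lipschitzOnWith_chordMap {L : Y →L[ℝ] Z} (hAL : LeftInverse A L) {f' : Y → Y →L[ℝ] Z}
    {s : Set Y} (hs : Convex ℝ s) (hf : ∀ y ∈ s, HasFDerivWithinAt f (f' y) s y) {K : ℝ≥0}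
    (hK : ∀ y ∈ s, ‖L - f' y‖ ≤ K * ‖A‖⁻¹) : LipschitzOnWith K (chordMap A f) s := by
  refine hs.lipschitzOnWith_of_nnnorm_hasFDerivWithin_le (f' := fun y => A.comp (L - f' y))
    (fun y hy => ?_) (fun y hy => ?_)
  · convert (hasFDerivWithinAt_id y s).sub (A.hasFDerivAt.comp_hasFDerivWithinAt y (hf y hy))
      using 1
    · rfl
    · ext v
      simp [hAL v]
  · rw [← NNReal.coe_le_coe, coe_nnnorm]
    calc ‖A.comp (L - f' y)‖ ≤ ‖L - f' y‖ * ‖A‖ := by rw [mul_comm]; exact A.opNorm_comp_le _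
      _ ≤ K := mul_le_of_le_mul_inv₀ K.coe_nonneg (norm_nonneg _) (hK y hy)

end ChordMap

theorem implicit_function_theorem_variant_general
    {X Y Z : Type*}
    [NormedAddCommGroup X]
    [NormedAddCommGroup Y] [NormedSpace ℝ Y] [CompleteSpace Y]
    [NormedAddCommGroup Z] [NormedSpace ℝ Z]
    (x₀ : X) (y₀ : Y) (ρ η : ℝ) (hη : 0 < η)
    (Φ : X → Y → Z) (DΦ : X → Y → (Y →L[ℝ] Z))
    -- Φ is continuous in x :
    (hΦcont : ∀ y ∈ ball y₀ η, ContinuousOn (fun x => Φ x y) (ball x₀ ρ))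
    -- Φ is continuously differentiable in y :
    (hΦdiff : ∀ x ∈ ball x₀ ρ, ∀ y ∈ ball y₀ η, HasFDerivAt (fun y' => Φ x y') (DΦ x y) y)
    -- L₀ := DΦ x₀ y₀ has a bounded inverse L₀inv :
    (L₀inv : Z →L[ℝ] Y)
    (hinv_left : ∀ y : Y, L₀inv (DΦ x₀ y₀ y) = y)
    (hinv_right : ∀ z : Z, DΦ x₀ y₀ (L₀inv z) = z)
    -- condition (i) :
    (hcond1 : ∀ x ∈ ball x₀ ρ, ∀ y ∈ ball y₀ η,
      ‖DΦ x₀ y₀ - DΦ x y‖ ≤ (1/3) * ‖L₀inv‖⁻¹)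
    -- condition (ii) :
    (hcond2 : ∀ x ∈ ball x₀ ρ, ‖Φ x y₀‖ ≤ (η/3) * ‖L₀inv‖⁻¹) :
    ∃ yf : X → Y, ContinuousOn yf (ball x₀ ρ) ∧
      ∀ x ∈ ball x₀ ρ, yf x ∈ ball y₀ η ∧ Φ x (yf x) = 0 ∧
        ∀ y ∈ ball y₀ η, Φ x y = 0 → y = yf x := by
  have hsub : closedBall y₀ (η / 2) ⊆ ball y₀ η := closedBall_subset_ball (by linarith)
  have hlip : ∀ x ∈ ball x₀ ρ, LipschitzOnWith (1 / 3) (chordMap L₀inv (Φ x)) (ball y₀ η) :=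
    fun x hx => lipschitzOnWith_chordMap hinv_left (convex_ball y₀ η)
      (fun y hy => (hΦdiff x hx y hy).hasFDerivWithinAt) (by simpa using hcond1 x hx)
  have hmaps : ∀ x ∈ ball x₀ ρ,
      MapsTo (chordMap L₀inv (Φ x)) (closedBall y₀ (η / 2)) (closedBall y₀ (η / 2)) := by
    intro x hx
    refine ((hlip x hx).mono hsub).mapsTo_closedBall ?_
    have := dist_chordMap_self_le (by positivity) (hcond2 x hx)
    norm_num
    linarith
  obtain ⟨yf, hyf_cont, hyf⟩ := exists_continuousOn_isFixedPt_of_lipschitzOnWith (K := 1 / 3)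
    (by norm_num) isClosed_closedBall.isComplete (nonempty_closedBall.2 (by positivity)) hmaps
    (fun x hx => (hlip x hx).mono hsub)
    (fun y hy => continuousOn_const.sub (L₀inv.continuous.comp_continuousOn (hΦcont y (hsub hy))))
  have hA : Injective L₀inv := LeftInverse.injective hinv_right
  refine ⟨yf, hyf_cont, fun x hx => ⟨hsub (hyf x hx).1, (isFixedPt_chordMap_iff hA).1 (hyf x hx).2,
    fun y hy hΦy => ?_⟩⟩
  exact (hlip x hx).eq_of_isFixedPt (by norm_num) hy (hsub (hyf x hx).1)
    ((isFixedPt_chordMap_iff hA).2 hΦy) (hyf x hx).2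

/-- **Implicit Function Theorem variant** (Lemma 2.4 of the paper).
`X`, `Y`, `Z` are Banach spaces, `Φ : X → Y → Z` is continuous in `x` and continuously
Fréchet differentiable in `y` (with derivative `DΦ x y`), `Φ x₀ y₀ = 0`, and
`L₀ := DΦ x₀ y₀` has a bounded inverse `L₀inv`.  Under the smallness conditions (i) and (ii),
there is a continuous map `yf : B(x₀,ρ) → B(y₀,η)` such that for each `x ∈ B(x₀,ρ)`,
`yf x` is the unique solution of `Φ x y = 0` in `B(y₀,η)`. -/
theorem implicit_function_theorem_variant
    {X Y Z : Type*}
    [NormedAddCommGroup X] [NormedSpace ℝ X] [CompleteSpace X]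
    [NormedAddCommGroup Y] [NormedSpace ℝ Y] [CompleteSpace Y]
    [NormedAddCommGroup Z] [NormedSpace ℝ Z] [CompleteSpace Z]
    (x₀ : X) (y₀ : Y) (ρ η : ℝ) (hρ : 0 < ρ) (hη : 0 < η)
    (Φ : X → Y → Z) (DΦ : X → Y → (Y →L[ℝ] Z))
    -- Φ is continuous in x :
    (hΦcont : ∀ y ∈ ball y₀ η, ContinuousOn (fun x => Φ x y) (ball x₀ ρ))
    -- Φ is continuously differentiable in y :
    (hΦdiff : ∀ x ∈ ball x₀ ρ, ∀ y ∈ ball y₀ η, HasFDerivAt (fun y' => Φ x y') (DΦ x y) y)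
    (hDcont : ∀ x ∈ ball x₀ ρ, ContinuousOn (fun y => DΦ x y) (ball y₀ η))
    (hΦ₀ : Φ x₀ y₀ = 0)
    -- L₀ := DΦ x₀ y₀ has a bounded inverse L₀inv :
    (L₀inv : Z →L[ℝ] Y)
    (hinv_left : ∀ y : Y, L₀inv (DΦ x₀ y₀ y) = y)
    (hinv_right : ∀ z : Z, DΦ x₀ y₀ (L₀inv z) = z)
    -- condition (i) :
    (hcond1 : ∀ x ∈ ball x₀ ρ, ∀ y ∈ ball y₀ η,
      ‖DΦ x₀ y₀ - DΦ x y‖ ≤ (1/3) * ‖L₀inv‖⁻¹)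
    -- condition (ii) :
    (hcond2 : ∀ x ∈ ball x₀ ρ, ‖Φ x y₀‖ ≤ (η/3) * ‖L₀inv‖⁻¹) :
    ∃ yf : X → Y, ContinuousOn yf (ball x₀ ρ) ∧
      ∀ x ∈ ball x₀ ρ, yf x ∈ ball y₀ η ∧ Φ x (yf x) = 0 ∧
        ∀ y ∈ ball y₀ η, Φ x y = 0 → y = yf x :=
  implicit_function_theorem_variant_general x₀ y₀ ρ η hη Φ DΦ hΦcont hΦdiff L₀inv hinv_left
    hinv_right hcond1 hcond2
end

section
/- Let N ∈ {3,4,5}, R ≥ 1 and 0 < λ ≤ R². Let W(x) = (1+|x|²/(N(N−2)))^{−(N−2)/2}, ΛW = ((N−2)/2)W + x·∇W, ζ(λ) = (λ + R²/(N(N−2)))^{−(N−2)/2}, and define P_λ : ℝ^N → ℝ by P_λ(x) = −λ^{−N/2}(ΛW)(x/λ) − ζ'(λ) for |x| < R√λ and P_λ(x) = 0 for |x| ≥ R√λ (this is ∂_λV(λ), the λ-derivative of the truncated bubble). Then there is a constant C depending only on N such that ‖P_λ‖_{L^{2N/(N+2)}(ℝ^N)} ≤ C R^{(6−N)/2} λ^{(N−2)/4}.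 -/
/-!
With `a = N(N-2)` and `k = (N-2)/2`, one has `ΛW(y) = k(1+|y|²/a)^{-k-1}(1-|y|²/a)`, hence
`|ΛW(y)| ≤ k(1+|y|²/a)^{-k} ≤ k a^k |y|^{2-N}`, and on the ball of radius `r = R√λ`
`|P_λ(x)| ≤ k a^k λ^{(N-4)/2} |x|^{2-N} + k(λ + R²/a)^{-N/2}`.
In polar coordinates the `L^p` norm of `|x|^s` on a ball of radius `r` is `C r^{s+N/p}` as soon
as `sp > -N`; for `p = 2N/(N+2)` and `s = 2-N` this is the condition `N < 6`, and the exponent is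
`(6-N)/2`. The singular term then contributes exactly `R^{(6-N)/2} λ^{(N-2)/4}`, and the constant
term `R^{(2-N)/2} λ^{(N+2)/4}`, which `λ ≤ R²` bounds by the same quantity.
-/

open MeasureTheory Metric Set Module

section RadialPower

variable {E : Type*} [NormedAddCommGroup E] [NormedSpace ℝ E] [FiniteDimensional ℝ E]
  [MeasurableSpace E] [BorelSpace E] [Nontrivial E] (μ : Measure E) [μ.IsAddHaarMeasure]

lemma integrableOn_ball_norm_rpow {t : ℝ} (ht : -(finrank ℝ E : ℝ) < t) (r : ℝ) :
    IntegrableOn (fun x : E ↦ ‖x‖ ^ t) (ball 0 r) μ := by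
  have hd : 1 ≤ finrank ℝ E := finrank_pos
  rw [integrableOn_fun_norm_addHaar μ (f := fun y ↦ y ^ t)]
  rcases le_or_gt r 0 with hr | hr
  · simp [Ioo_eq_empty_of_le hr]
  have hd' : ((finrank ℝ E - 1 : ℕ) : ℝ) = finrank ℝ E - 1 := by push_cast [Nat.cast_sub hd]; ring
  refine ((intervalIntegral.integrableOn_Ioo_rpow_iff hr).2
    (by linarith : -1 < t + (finrank ℝ E - 1 : ℕ))).congr_fun (fun y hy ↦ ?_) measurableSet_Ioo
  simp only [smul_eq_mul]
  rw [Real.rpow_add hy.1, Real.rpow_natCast, mul_comm]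

lemma integral_ball_norm_rpow {t : ℝ} (ht : -(finrank ℝ E : ℝ) < t) {r : ℝ} (hr : 0 ≤ r) :
    ∫ x in ball (0 : E) r, ‖x‖ ^ t ∂μ =
      finrank ℝ E * μ.real (ball 0 1) * (r ^ (t + finrank ℝ E) / (t + finrank ℝ E)) := by
  have hd : 1 ≤ finrank ℝ E := finrank_pos
  have hball : ∀ x : E, (ball (0 : E) r).indicator (‖·‖ ^ t) x =
      (Iio r).indicator (· ^ t) ‖x‖ := fun x ↦ by
    by_cases hx : ‖x‖ < r <;> simp [indicator, hx]
  rw [← integral_indicator measurableSet_ball, funext hball, integral_fun_norm_addHaar,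
    nsmul_eq_mul, smul_eq_mul, ← integral_indicator measurableSet_Ioi]
  have hIoo : ∀ y : ℝ, (Ioi 0).indicator (fun y ↦ y ^ (finrank ℝ E - 1) • (Iio r).indicator
      (· ^ t) y) y = (Ioo 0 r).indicator (· ^ (t + finrank ℝ E - 1)) y := fun y ↦ by
    by_cases h0 : 0 < y
    · by_cases hyr : y < r
      · simp only [indicator, mem_Ioi, h0, mem_Iio, hyr, mem_Ioo, and_self, if_true,
          smul_eq_mul]
        rw [show t + finrank ℝ E - 1 = ((finrank ℝ E - 1 : ℕ) : ℝ) + t by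
          push_cast [Nat.cast_sub hd]; ring, Real.rpow_add h0, Real.rpow_natCast]
      · simp [indicator, hyr]
    · simp [indicator, h0]
  rw [funext hIoo, integral_indicator measurableSet_Ioo, ← integral_Ioc_eq_integral_Ioo,
    ← intervalIntegral.integral_of_le hr, integral_rpow (Or.inl (by linarith)), Real.zero_rpow (by linarith)]
  ring_nf

lemma eLpNorm_indicator_ball_norm_rpow {s p : ℝ} (hp : 0 < p)
    (hs : -(finrank ℝ E : ℝ) < s * p) {r : ℝ} (hr : 0 ≤ r) :
    eLpNorm ((ball (0 : E) r).indicator (‖·‖ ^ s)) (ENNReal.ofReal p) μ =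
      ENNReal.ofReal ((finrank ℝ E * μ.real (ball 0 1) / (s * p + finrank ℝ E)) ^ (1 / p) *
        r ^ (s + finrank ℝ E / p)) := by
  have hd : (0 : ℝ) < finrank ℝ E := by exact_mod_cast finrank_pos
  have hsd : 0 ≤ s * p + finrank ℝ E := by linarith
  have hpow : ∀ x : E, ‖(ball (0 : E) r).indicator (‖·‖ ^ s) x‖ₑ ^ p =
      ENNReal.ofReal ((ball (0 : E) r).indicator (‖·‖ ^ (s * p)) x) := fun x ↦ by
    by_cases hx : x ∈ ball (0 : E) r
    · rw [indicator_of_mem hx, indicator_of_mem hx, Real.enorm_of_nonneg (by positivity),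
        ENNReal.ofReal_rpow_of_nonneg (by positivity) hp.le, ← Real.rpow_mul (norm_nonneg x)]
    · simp [indicator_of_notMem hx, ENNReal.zero_rpow_of_pos hp]
  rw [eLpNorm_eq_lintegral_rpow_enorm_toReal (by simpa using hp) ENNReal.ofReal_ne_top,
    ENNReal.toReal_ofReal hp.le, lintegral_congr hpow, ← ofReal_integral_eq_lintegral_ofReal
      ((integrable_indicator_iff measurableSet_ball).2 (integrableOn_ball_norm_rpow μ hs r))
      (.of_forall fun x ↦ indicator_nonneg (fun x _ ↦ by positivity) x),
    integral_indicator measurableSet_ball, integral_ball_norm_rpow μ hs hr,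
    ENNReal.ofReal_rpow_of_nonneg (by
      have := div_nonneg (Real.rpow_nonneg hr (s * p + finrank ℝ E)) hsd; positivity)
      (by positivity)]
  congr 1
  rw [mul_div_assoc', mul_div_right_comm,
    Real.mul_rpow (div_nonneg (by positivity) hsd) (by positivity), ← Real.rpow_mul hr]
  congr 2
  field_simp

lemma exists_eLpNorm_indicator_ball_norm_rpow_eq {s p : ℝ} (hp : 0 < p)
    (hs : -(finrank ℝ E : ℝ) < s * p) :
    ∃ C > 0, ∀ r, 0 ≤ r → eLpNorm ((ball (0 : E) r).indicator (‖·‖ ^ s)) (ENNReal.ofReal p) μ =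
      ENNReal.ofReal (C * r ^ (s + finrank ℝ E / p)) := by
  have hd : (0 : ℝ) < finrank ℝ E := by exact_mod_cast finrank_pos
  have hvol : 0 < μ.real (ball 0 1) :=
    ENNReal.toReal_pos (measure_ball_pos μ 0 one_pos).ne' measure_ball_lt_top.ne
  exact ⟨_, Real.rpow_pos_of_pos (div_pos (by positivity) (by linarith)) _,
    fun r hr ↦ eLpNorm_indicator_ball_norm_rpow μ hp hs hr⟩

end RadialPower

section Profile

variable {F : Type*} [NormedAddCommGroup F] [InnerProductSpace ℝ F] {a : ℝ}

lemma fderiv_one_add_norm_sq_div_rpow_apply_self (ha : 0 < a) (c : ℝ) (x : F) :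
    fderiv ℝ (fun y : F ↦ (1 + ‖y‖ ^ 2 / a) ^ c) x x =
      c * (1 + ‖x‖ ^ 2 / a) ^ (c - 1) * (2 * ‖x‖ ^ 2 / a) := by
  have hinner : HasFDerivAt (fun y : F ↦ 1 + ‖y‖ ^ 2 / a) (a⁻¹ • 2 • innerSL ℝ x) x := by
    simpa only [div_eq_mul_inv] using
      ((hasStrictFDerivAt_norm_sq x).hasFDerivAt.mul_const a⁻¹).const_add 1
  rw [(hinner.rpow_const (Or.inl (by positivity))).fderiv]
  simp only [_root_.smul_apply, innerSL_apply_apply, real_inner_self_eq_norm_sq,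
    smul_eq_mul, nsmul_eq_mul]
  ring

lemma abs_mul_rpow_neg_add_le {k t : ℝ} (hk : 0 ≤ k) (ht : 0 ≤ t) :
    |k * (1 + t) ^ (-k) + -k * (1 + t) ^ (-k - 1) * (2 * t)| ≤ k * (1 + t) ^ (-k) := by
  have hu : 0 < 1 + t := by linarith
  have hsplit : (1 + t) ^ (-k - 1) = (1 + t) ^ (-k) / (1 + t) := by
    rw [Real.rpow_sub hu, Real.rpow_one]
  rw [hsplit, show k * (1 + t) ^ (-k) + -k * ((1 + t) ^ (-k) / (1 + t)) * (2 * t) =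
    k * (1 + t) ^ (-k) * ((1 - t) / (1 + t)) by field_simp; ring, abs_mul,
    abs_of_nonneg (by positivity)]
  refine mul_le_of_le_one_right (by positivity) ?_
  rw [abs_div, abs_of_pos hu, div_le_one hu, abs_le]
  constructor <;> linarith

lemma abs_mul_add_fderiv_apply_self_le (ha : 0 < a) {k : ℝ} (hk : 0 ≤ k) {y : F} (hy : y ≠ 0) :
    |k * (1 + ‖y‖ ^ 2 / a) ^ (-k) + fderiv ℝ (fun z : F ↦ (1 + ‖z‖ ^ 2 / a) ^ (-k)) y y| ≤
      k * a ^ k * ‖y‖ ^ (-(2 * k)) := by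
  have hy0 : 0 < ‖y‖ := norm_pos_iff.2 hy
  rw [fderiv_one_add_norm_sq_div_rpow_apply_self ha, mul_div_assoc]
  refine (abs_mul_rpow_neg_add_le hk (by positivity)).trans ?_
  calc k * (1 + ‖y‖ ^ 2 / a) ^ (-k) ≤ k * (‖y‖ ^ 2 / a) ^ (-k) := by
        gcongr ?_ * ?_
        exact Real.rpow_le_rpow_of_nonpos (by positivity) (by linarith) (by linarith)
    _ = k * a ^ k * ‖y‖ ^ (-(2 * k)) := by
        rw [Real.div_rpow (by positivity) ha.le, Real.rpow_neg ha.le, div_inv_eq_mul,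
          ← Real.rpow_natCast, ← Real.rpow_mul hy0.le]
        push_cast; ring_nf

/-- Only off the origin, where the junk value `‖0‖ ^ (2 - ν) = 0` does not interfere. -/
lemma abs_bubble_derivative_le {ν R lam : ℝ} (hν : 2 ≤ ν) (ha : 0 < a) (hlam : 0 < lam)
    {W ΛW P : F → ℝ} (hW : ∀ x, W x = (1 + ‖x‖ ^ 2 / a) ^ (-((ν - 2) / 2)))
    (hΛW : ∀ x, ΛW x = ((ν - 2) / 2) * W x + fderiv ℝ W x x)
    (hP : ∀ x, P x = if ‖x‖ < R * Real.sqrt lam then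
      -(lam ^ (-(ν / 2)) * ΛW (lam⁻¹ • x)) - (-((ν - 2) / 2) * (lam + R ^ 2 / a) ^ (-(ν / 2)))
      else 0) {x : F} (hx : x ≠ 0) :
    |P x| ≤ (ball 0 (R * Real.sqrt lam)).indicator (fun x ↦
      (ν - 2) / 2 * a ^ ((ν - 2) / 2) * lam ^ ((ν - 4) / 2) * ‖x‖ ^ (-(ν - 2)) +
        (ν - 2) / 2 * (lam + R ^ 2 / a) ^ (-(ν / 2))) x := by
  have hk : 0 ≤ (ν - 2) / 2 := by linarith
  have hΛW_le : lam ^ (-(ν / 2)) * |ΛW (lam⁻¹ • x)| ≤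
      (ν - 2) / 2 * a ^ ((ν - 2) / 2) * lam ^ ((ν - 4) / 2) * ‖x‖ ^ (-(ν - 2)) := by
    have hbound := abs_mul_add_fderiv_apply_self_le ha hk (smul_ne_zero (inv_ne_zero hlam.ne') hx)
    rw [← funext hW, ← hW, ← hΛW, show 2 * ((ν - 2) / 2) = ν - 2 by ring, norm_smul,
      Real.norm_of_nonneg (inv_nonneg.2 hlam.le), Real.mul_rpow (inv_nonneg.2 hlam.le)
      (norm_nonneg x), Real.inv_rpow hlam.le, ← Real.rpow_neg hlam.le, neg_neg] at hbound
    calc lam ^ (-(ν / 2)) * |ΛW (lam⁻¹ • x)|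
        ≤ lam ^ (-(ν / 2)) * ((ν - 2) / 2 * a ^ ((ν - 2) / 2) *
          (lam ^ (ν - 2) * ‖x‖ ^ (-(ν - 2)))) := by gcongr
      _ = (ν - 2) / 2 * a ^ ((ν - 2) / 2) * (lam ^ (-(ν / 2)) * lam ^ (ν - 2)) *
          ‖x‖ ^ (-(ν - 2)) := by ring
      _ = _ := by rw [← Real.rpow_add hlam]; ring_nf
  rw [hP x]
  by_cases hxr : ‖x‖ < R * Real.sqrt lam
  · rw [if_pos hxr, indicator_of_mem (mem_ball_zero_iff.2 hxr)]
    refine (abs_sub _ _).trans (add_le_add ?_ (le_of_eq ?_))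
    · rwa [abs_neg, abs_mul, abs_of_pos (Real.rpow_pos_of_pos hlam _)]
    · rw [neg_mul, abs_neg, abs_of_nonneg (by positivity)]
  · rw [if_neg hxr, indicator_of_notMem (fun h ↦ hxr (mem_ball_zero_iff.1 h)), abs_zero]

end Profile

/-- The constant is written as `‖x‖ ^ 0` so that both terms obey the same scaling law. -/
lemma eLpNorm_indicator_ball_mul_norm_rpow_add_le {E : Type*} [NormedAddCommGroup E]
    [MeasurableSpace E] [OpensMeasurableSpace E] (μ : Measure E) (A c s : ℝ) {p : ℝ}
    (hp : 1 ≤ p) (r : ℝ) :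
    eLpNorm ((ball (0 : E) r).indicator (fun x ↦ A * ‖x‖ ^ s + c)) (ENNReal.ofReal p) μ ≤
      ‖A‖ₑ * eLpNorm ((ball (0 : E) r).indicator (‖·‖ ^ s)) (ENNReal.ofReal p) μ +
        ‖c‖ₑ * eLpNorm ((ball (0 : E) r).indicator (‖·‖ ^ (0 : ℝ))) (ENNReal.ofReal p) μ := by
  have hsplit : (ball (0 : E) r).indicator (fun x ↦ A * ‖x‖ ^ s + c) =
      A • (ball (0 : E) r).indicator (‖·‖ ^ s) +
        c • (ball (0 : E) r).indicator (‖·‖ ^ (0 : ℝ)) := by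
    ext x
    by_cases hx : x ∈ ball (0 : E) r <;> simp [hx]
  have hmeas : ∀ t : ℝ, AEStronglyMeasurable ((ball (0 : E) r).indicator (‖·‖ ^ t)) μ :=
    fun t ↦ ((measurable_norm.pow_const t).indicator measurableSet_ball).aestronglyMeasurable
  rw [hsplit, ← eLpNorm_const_smul, ← eLpNorm_const_smul]
  exact eLpNorm_add_le ((hmeas s).const_smul A) ((hmeas 0).const_smul c)
    (by simpa using ENNReal.ofReal_le_ofReal hp)

lemma exists_eLpNorm_indicator_ball_le {N : ℕ} (hN2 : 2 ≤ N) (hN6 : N < 6) :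
    ∃ C₁ > 0, ∃ C₀ > 0, ∀ A c r : ℝ, 0 ≤ A → 0 ≤ c → 0 ≤ r →
      eLpNorm ((ball (0 : EuclideanSpace ℝ (Fin N)) r).indicator
          (fun x ↦ A * ‖x‖ ^ (-((N : ℝ) - 2)) + c)) (ENNReal.ofReal (2 * N / (N + 2))) volume ≤
        ENNReal.ofReal (C₁ * A * r ^ ((6 - N : ℝ) / 2) + C₀ * c * r ^ ((N + 2 : ℝ) / 2)) := by
  have hN2' : (2 : ℝ) ≤ N := by exact_mod_cast hN2
  have hN6' : (N : ℝ) < 6 := by exact_mod_cast hN6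
  have : Nonempty (Fin N) := ⟨⟨0, by omega⟩⟩
  set p : ℝ := 2 * N / (N + 2) with hp_def
  have hp : 1 ≤ p := by rw [hp_def, le_div_iff₀ (by linarith)]; linarith
  have hNp : (N : ℝ) / p = (N + 2) / 2 := by rw [hp_def]; field_simp
  obtain ⟨C₁, hC₁, hnorm₁⟩ := exists_eLpNorm_indicator_ball_norm_rpow_eq volume
    (s := -((N : ℝ) - 2)) (p := p) (by linarith) (by
      rw [finrank_euclideanSpace_fin, hp_def, mul_div_assoc', lt_div_iff₀ (by linarith)]
      nlinarith)
  obtain ⟨C₀, hC₀, hnorm₀⟩ := exists_eLpNorm_indicator_ball_norm_rpow_eq volume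
    (s := 0) (p := p) (by linarith) (by rw [finrank_euclideanSpace_fin]; linarith)
  simp only [finrank_euclideanSpace_fin, hNp, zero_add,
    show -((N : ℝ) - 2) + (N + 2) / 2 = (6 - N) / 2 by ring] at hnorm₁ hnorm₀
  refine ⟨C₁, hC₁, C₀, hC₀, fun A c r hA hc hr ↦ ?_⟩
  refine (eLpNorm_indicator_ball_mul_norm_rpow_add_le _ A c _ hp r).trans_eq ?_
  rw [hnorm₁ r hr, hnorm₀ r hr, Real.enorm_of_nonneg hA, Real.enorm_of_nonneg hc,
    ← ENNReal.ofReal_mul hA, ← ENNReal.ofReal_mul hc, ← ENNReal.ofReal_add (by positivity)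
    (by positivity)]
  ring_nf

lemma mul_sqrt_rpow {R lam : ℝ} (hR : 0 ≤ R) (hlam : 0 ≤ lam) (e : ℝ) :
    (R * Real.sqrt lam) ^ e = R ^ e * lam ^ (e / 2) := by
  rw [Real.sqrt_eq_rpow, Real.mul_rpow hR (by positivity), ← Real.rpow_mul hlam, one_div_mul_eq_div]

lemma rpow_mul_mul_sqrt_rpow {ν R lam : ℝ} (hR : 0 ≤ R) (hlam : 0 < lam) :
    lam ^ ((ν - 4) / 2) * (R * Real.sqrt lam) ^ ((6 - ν) / 2) =
      R ^ ((6 - ν) / 2) * lam ^ ((ν - 2) / 4) := by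
  rw [mul_sqrt_rpow hR hlam.le, mul_left_comm, ← Real.rpow_add hlam]
  ring_nf

lemma rpow_add_sq_div_mul_mul_sqrt_rpow_le {ν a R lam : ℝ} (hν : 0 ≤ ν) (ha : 0 < a)
    (hR : 0 < R) (hlam : 0 < lam) (hlamR : lam ≤ R ^ 2) :
    (lam + R ^ 2 / a) ^ (-(ν / 2)) * (R * Real.sqrt lam) ^ ((ν + 2) / 2) ≤
      a ^ (ν / 2) * (R ^ ((6 - ν) / 2) * lam ^ ((ν - 2) / 4)) := by
  have hdecay : (lam + R ^ 2 / a) ^ (-(ν / 2)) ≤ a ^ (ν / 2) * R ^ (-ν) := by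
    calc (lam + R ^ 2 / a) ^ (-(ν / 2)) ≤ (R ^ 2 / a) ^ (-(ν / 2)) :=
          Real.rpow_le_rpow_of_nonpos (by positivity) (by linarith) (by linarith)
      _ = a ^ (ν / 2) * R ^ (-ν) := by
          rw [Real.div_rpow (by positivity) ha.le, Real.rpow_neg ha.le, div_inv_eq_mul,
            ← Real.rpow_natCast, ← Real.rpow_mul hR.le]
          push_cast; ring_nf
  have hgrowth : (R * Real.sqrt lam) ^ ((ν + 2) / 2) ≤
      R ^ ν * (R ^ ((6 - ν) / 2) * lam ^ ((ν - 2) / 4)) := by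
    calc (R * Real.sqrt lam) ^ ((ν + 2) / 2) = R ^ ((ν + 2) / 2) * lam * lam ^ ((ν - 2) / 4) := by
          rw [mul_sqrt_rpow hR.le hlam.le, mul_assoc, ← Real.rpow_one_add' hlam.le (by linarith)]
          ring_nf
      _ ≤ R ^ ((ν + 2) / 2) * R ^ 2 * lam ^ ((ν - 2) / 4) := by gcongr
      _ = R ^ ν * (R ^ ((6 - ν) / 2) * lam ^ ((ν - 2) / 4)) := by
          rw [← Real.rpow_natCast, ← Real.rpow_add hR, ← mul_assoc, ← Real.rpow_add hR]
          ring_nf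
  calc (lam + R ^ 2 / a) ^ (-(ν / 2)) * (R * Real.sqrt lam) ^ ((ν + 2) / 2)
      ≤ (a ^ (ν / 2) * R ^ (-ν)) * (R ^ ν * (R ^ ((6 - ν) / 2) * lam ^ ((ν - 2) / 4))) := by
        gcongr
    _ = a ^ (ν / 2) * (R ^ ((6 - ν) / 2) * lam ^ ((ν - 2) / 4)) := by
        rw [mul_assoc, ← mul_assoc (R ^ (-ν)), Real.rpow_neg hR.le, inv_mul_cancel₀ (by positivity),
          one_mul]

/-- For `N ∈ {3,4,5}` there is `C = C(N)` such that for all `R ≥ 1` and `0 < λ ≤ R²`, the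
`λ`-derivative `P_λ = ∂_λV(λ)` of the truncated bubble, given by
`P_λ(x) = −λ^{−N/2}(ΛW)(x/λ) − ζ'(λ)` for `|x| < R√λ` and `0` for `|x| ≥ R√λ`
(with `ΛW = ((N−2)/2)W + x·∇W` and `ζ'(λ) = −((N−2)/2)(λ + R²/(N(N−2)))^{−N/2}`), satisfies
`‖P_λ‖_{L^{2N/(N+2)}(ℝ^N)} ≤ C R^{(6−N)/2} λ^{(N−2)/4}`. -/
theorem bubble_derivative_dual_Lp_bound
    (N : ℕ) (hN : N ∈ ({3, 4, 5} : Set ℕ)) :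
    ∃ C > 0, ∀ R lam : ℝ, 1 ≤ R → 0 < lam → lam ≤ R^2 →
      ∀ W ΛW P : EuclideanSpace ℝ (Fin N) → ℝ,
        (∀ x, W x = (1 + ‖x‖^2 / ((N : ℝ) * ((N : ℝ) - 2))) ^ (-(((N : ℝ) - 2) / 2))) →
        (∀ x, ΛW x = (((N : ℝ) - 2) / 2) * W x + fderiv ℝ W x x) →
        (∀ x, P x = if ‖x‖ < R * Real.sqrt lam then
            -(lam ^ (-((N : ℝ) / 2)) * ΛW (lam⁻¹ • x))
              - (-(((N : ℝ) - 2) / 2) *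
                (lam + R^2 / ((N : ℝ) * ((N : ℝ) - 2))) ^ (-((N : ℝ) / 2)))
          else 0) →
        eLpNorm P (ENNReal.ofReal (2 * (N : ℝ) / ((N : ℝ) + 2))) volume
          ≤ ENNReal.ofReal (C * R ^ (((6 : ℝ) - N) / 2) * lam ^ (((N : ℝ) - 2) / 4)) := by
  obtain ⟨hN3, hN5⟩ : 3 ≤ N ∧ N ≤ 5 := by
    rcases hN with rfl | rfl | rfl <;> norm_num
  obtain ⟨C₁, hC₁, C₀, hC₀, hnorm⟩ :=
    exists_eLpNorm_indicator_ball_le (N := N) (by omega) (by omega)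
  have hk : 0 < ((N : ℝ) - 2) / 2 := by
    have : (3 : ℝ) ≤ N := by exact_mod_cast hN3
    linarith
  have ha : 0 < (N : ℝ) * ((N : ℝ) - 2) := mul_pos (by linarith) (by linarith)
  refine ⟨((N : ℝ) - 2) / 2 * ((N : ℝ) * ((N : ℝ) - 2)) ^ (((N : ℝ) - 2) / 2) * C₁ +
    ((N : ℝ) - 2) / 2 * ((N : ℝ) * ((N : ℝ) - 2)) ^ ((N : ℝ) / 2) * C₀, by positivity,
    fun R lam hR hlam hlamR W ΛW P hW hΛW hP ↦ ?_⟩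
  have : Nonempty (Fin N) := ⟨⟨0, by omega⟩⟩
  have hPle := (Measure.ae_ne (volume : Measure (EuclideanSpace ℝ (Fin N))) 0).mono fun x hx ↦
    abs_bubble_derivative_le (by linarith) ha hlam hW hΛW hP hx
  refine (eLpNorm_mono_ae_real hPle).trans ((hnorm _ _ _ (by positivity) (by positivity)
    (by positivity)).trans (ENNReal.ofReal_le_ofReal ?_))
  linear_combination
    (C₁ * (((N : ℝ) - 2) / 2) * ((N : ℝ) * ((N : ℝ) - 2)) ^ (((N : ℝ) - 2) / 2)) *
      rpow_mul_mul_sqrt_rpow (ν := N) (R := R) (by positivity) hlam +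
    (C₀ * (((N : ℝ) - 2) / 2)) *
      rpow_add_sq_div_mul_mul_sqrt_rpow_le (ν := N) (by positivity) ha (by linarith) hlam hlamR
end

section
/- Let t₀ < T < +∞, c, C > 0, and let λ : [t₀, T) → (0, +∞) be continuously differentiable. Suppose that for every t ∈ [t₀, T) one has |λ'(t)| ≤ C·exp(−c·∫_{t₀}^{t} ds/λ(s)). Then λ(t) ≥ λ(t₀)·e^{−C/c} for every t ∈ [t₀, T); in particular λ(t) does not tend to 0 as t → T. -/
open Set Filter

/-- If `λ : [t₀, T) → (0,∞)` is `C¹` and `|λ'(t)| ≤ C exp(−c ∫_{t₀}^t ds/λ(s))` on `[t₀,T)`,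
then `λ(t) ≥ λ(t₀) e^{−C/c}` on `[t₀,T)`; in particular `λ` does not tend to `0` as `t → T⁻`. -/
theorem no_concentration_from_exponential_decay
    (t₀ T c C : ℝ) (ht : t₀ < T) (hc : 0 < c) (hC : 0 < C)
    (lam lam' : ℝ → ℝ)
    (hpos : ∀ t ∈ Ico t₀ T, 0 < lam t)
    (hderiv : ∀ t ∈ Ico t₀ T, HasDerivAt lam (lam' t) t)
    (hcont : ContinuousOn lam' (Ico t₀ T))
    (hbound : ∀ t ∈ Ico t₀ T,
      |lam' t| ≤ C * Real.exp (-c * ∫ s in t₀..t, (lam s)⁻¹)) :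
    (∀ t ∈ Ico t₀ T, lam t₀ * Real.exp (-C / c) ≤ lam t) ∧
      ¬ Tendsto lam (nhdsWithin T (Iio T)) (nhds 0) := by
  set I : ℝ → ℝ := fun u => ∫ s in t₀..u, (lam s)⁻¹ with hIdef
  have hlamc : ContinuousOn lam (Ico t₀ T) := fun t htm =>
    ((hderiv t htm).continuousAt).continuousWithinAt
  have hinvc : ContinuousOn (fun s => (lam s)⁻¹) (Ico t₀ T) :=
    hlamc.inv₀ (fun t htm => (hpos t htm).ne')
  have hint : ∀ t ∈ Ico t₀ T,
      IntervalIntegrable (fun s => (lam s)⁻¹) MeasureTheory.volume t₀ t := by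
    intro t htm
    have hsub : Icc t₀ t ⊆ Ico t₀ T := fun x hx => ⟨hx.1, lt_of_le_of_lt hx.2 htm.2⟩
    exact (hinvc.mono hsub).intervalIntegrable_of_Icc htm.1
  have hIderiv : ∀ u ∈ Ioo t₀ T, HasDerivAt I ((lam u)⁻¹) u := by
    intro u hu
    have hu' : u ∈ Ico t₀ T := ⟨hu.1.le, hu.2⟩
    have hmeas := (hinvc.mono Ioo_subset_Ico_self).stronglyMeasurableAtFilter (μ := MeasureTheory.volume) isOpen_Ioo u hu
    have hca : ContinuousAt (fun s => (lam s)⁻¹) u :=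
      (hinvc.mono Ioo_subset_Ico_self).continuousAt (isOpen_Ioo.mem_nhds hu)
    exact intervalIntegral.integral_hasDerivAt_right (hint u hu') hmeas hca
  have hIcont : ContinuousOn I (Ico t₀ T) := by
    intro u hu
    set m : ℝ := (u + T) / 2 with hm
    have hum : u < m := by simp only [hm]; linarith [hu.2]
    have hmT : m < T := by simp only [hm]; linarith [hu.2]
    have hmem : m ∈ Ico t₀ T := ⟨le_of_lt (lt_of_le_of_lt hu.1 hum), hmT⟩
    have h_int : IntervalIntegrable (fun s => (lam s)⁻¹) MeasureTheory.volume
        (min t₀ t₀) (max t₀ m) := by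
      rw [min_self, max_eq_right hmem.1]
      exact hint m hmem
    have hw : ContinuousWithinAt I (Icc t₀ m) u :=
      intervalIntegral.continuousWithinAt_primitive (MeasureTheory.measure_singleton u) h_int
    refine hw.mono_of_mem_nhdsWithin ?_
    have h1 : Iic m ∈ nhdsWithin u (Ico t₀ T) :=
      mem_nhdsWithin_of_mem_nhds (Iic_mem_nhds hum)
    refine mem_of_superset (Filter.inter_mem h1 self_mem_nhdsWithin) ?_
    rintro x ⟨hx1, hx2⟩
    exact ⟨hx2.1, hx1⟩
  set h : ℝ → ℝ := fun u => Real.log (lam u) - (C / c) * Real.exp (-c * I u) with hh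
  set g : ℝ → ℝ := fun u => lam' u / lam u + C * Real.exp (-c * I u) * (lam u)⁻¹ with hg
  have hhcont : ContinuousOn h (Ico t₀ T) := by
    refine (hlamc.log (fun t htm => (hpos t htm).ne')).sub ?_
    exact continuousOn_const.mul
      (Real.continuous_exp.comp_continuousOn (continuousOn_const.mul hIcont))
  have hhderiv : ∀ x ∈ interior (Ico t₀ T), HasDerivWithinAt h (g x) (interior (Ico t₀ T)) x := by
    intro x hx
    rw [interior_Ico] at hx
    have hx' : x ∈ Ico t₀ T := ⟨hx.1.le, hx.2⟩
    have h1 : HasDerivAt (fun u => Real.log (lam u)) (lam' x / lam x) x :=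
      (hderiv x hx').log (hpos x hx').ne'
    have h2 : HasDerivAt (fun u => -c * I u) (-c * (lam x)⁻¹) x :=
      (hIderiv x hx).const_mul (-c)
    have h3 : HasDerivAt (fun u => Real.exp (-c * I u))
        (Real.exp (-c * I x) * (-c * (lam x)⁻¹)) x := h2.exp
    have h4 : HasDerivAt h
        (lam' x / lam x - C / c * (Real.exp (-c * I x) * (-c * (lam x)⁻¹))) x :=
      h1.sub (h3.const_mul (C / c))
    have heq : lam' x / lam x - C / c * (Real.exp (-c * I x) * (-c * (lam x)⁻¹)) = g x := by
      simp only [hg]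
      field_simp [hc.ne', (hpos x hx').ne']
      ring
    rw [heq] at h4
    exact h4.hasDerivWithinAt
  have hgnonneg : ∀ x ∈ interior (Ico t₀ T), 0 ≤ g x := by
    intro x hx
    rw [interior_Ico] at hx
    have hx' : x ∈ Ico t₀ T := ⟨hx.1.le, hx.2⟩
    have hl : 0 < lam x := hpos x hx'
    have hb := hbound x hx'
    have : g x = (lam' x + C * Real.exp (-c * I x)) / lam x := by
      simp only [hg]; field_simp
    rw [this]
    apply div_nonneg _ hl.le
    have := neg_abs_le (lam' x)
    linarith
  have hmono : MonotoneOn h (Ico t₀ T) := by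
    exact monotoneOn_of_hasDerivWithinAt_nonneg (convex_Ico t₀ T) hhcont hhderiv hgnonneg
  have ht₀ : t₀ ∈ Ico t₀ T := ⟨le_refl _, ht⟩
  have hI0 : I t₀ = 0 := intervalIntegral.integral_same
  have main : ∀ t ∈ Ico t₀ T, lam t₀ * Real.exp (-C / c) ≤ lam t := by
    intro t htm
    have hmle := hmono ht₀ htm htm.1
    have hexp : 0 ≤ Real.exp (-c * I t) := (Real.exp_pos _).le
    have hCc : 0 ≤ C / c := le_of_lt (div_pos hC hc)
    have hlog : Real.log (lam t₀) - C / c ≤ Real.log (lam t) := by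
      simp only [hh, hI0, mul_zero, Real.exp_zero, mul_one] at hmle
      nlinarith [mul_nonneg hCc hexp]
    have : lam t₀ * Real.exp (-C / c) = Real.exp (Real.log (lam t₀) - C / c) := by
      rw [Real.exp_sub, Real.exp_log (hpos t₀ ht₀), neg_div, Real.exp_neg]
      ring
    rw [this]
    calc Real.exp (Real.log (lam t₀) - C / c) ≤ Real.exp (Real.log (lam t)) :=
          Real.exp_le_exp.mpr hlog
      _ = lam t := Real.exp_log (hpos t htm)
  refine ⟨main, ?_⟩
  intro htend
  set ε : ℝ := lam t₀ * Real.exp (-C / c) with hε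
  have hεpos : 0 < ε := mul_pos (hpos t₀ ht₀) (Real.exp_pos _)
  have h1 : ∀ᶠ x in nhdsWithin T (Iio T), lam x < ε := by
    have := htend (Iio_mem_nhds hεpos)
    filter_upwards [this] with x hx using hx
  have h2 : ∀ᶠ x in nhdsWithin T (Iio T), x ∈ Ico t₀ T := by
    have ho : Ioi t₀ ∈ nhdsWithin T (Iio T) :=
      mem_nhdsWithin_of_mem_nhds (Ioi_mem_nhds ht)
    filter_upwards [ho, self_mem_nhdsWithin] with x hx1 hx2
    exact ⟨le_of_lt hx1, hx2⟩
  have : ∀ᶠ x in nhdsWithin T (Iio T), False := by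
    filter_upwards [h1, h2] with x hx1 hx2
    exact absurd (main x hx2) (not_le.mpr hx1)
  exact (this.exists).choose_spec
end

section
/- Let t₀ < T ∈ ℝ, K > 0, and let λ : [t₀, T) → (0, +∞) be continuous with ∫_{t}^{T} λ(τ)^{−1/2} dτ < +∞ and λ(t)^{1/4} ≤ K·∫_{t}^{T} λ(τ)^{−1/2} dτ for every t ∈ [t₀, T). Then for every t ∈ [t₀, T): ∫_{t}^{T} λ(τ)^{−1/2} dτ ≥ (3/K²)^{1/3}·(T−t)^{1/3}. Moreover, there exist a constant C depending only on K and a sequence tₙ → T such that λ(tₙ) ≤ C·(T−tₙ)^{4/3}. -/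
open Set Filter MeasureTheory Topology

/-!
Write `ψ(t) = ∫_t^T λ^{-1/2}`. The hypothesis `λ^{1/4} ≤ Kψ` says `-ψ' = λ^{-1/2} ≥ (Kψ)^{-2}`, so
`ψ³ + 3t/K²` is nonincreasing; comparing `t` with `T`, where `ψ` vanishes, gives
`ψ(t)³ ≥ 3(T - t)/K²`.

If instead `λ(τ) > C(T - τ)^{4/3}` on a whole interval `[s, T)`, integrating gives
`ψ(s) ≤ 3C^{-1/2}(T - s)^{1/3}`, and the hypothesis at `s` then forces `C^{3/4} < 3K`. Hence for
`C = (3K)^{4/3}` the bound `λ ≤ C(T - ·)^{4/3}` holds at points arbitrarily close to `T`.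
-/

theorem antitoneOn_pow_three_add_mul {ψ g : ℝ → ℝ} {a b c : ℝ}
    (hcont : ContinuousOn ψ (Icc a b)) (hderiv : ∀ u ∈ Ioo a b, HasDerivAt ψ (-g u) u)
    (hc : ∀ u ∈ Ioo a b, c ≤ ψ u ^ 2 * g u) :
    AntitoneOn (fun u => ψ u ^ 3 + 3 * c * u) (Icc a b) := by
  refine antitoneOn_of_hasDerivWithinAt_nonpos (convex_Icc a b) (by fun_prop)
    (f' := fun u => 3 * ψ u ^ 2 * (-g u) + 3 * c) (fun u hu => ?_) (fun u hu => ?_)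
  · rw [interior_Icc] at hu
    have := ((hderiv u hu).pow 3).add ((hasDerivAt_id' u).const_mul (3 * c))
    exact (this.congr_deriv (by push_cast; ring)).hasDerivWithinAt
  · rw [interior_Icc] at hu
    linarith [hc u hu]

theorem mul_sub_le_pow_three {ψ g : ℝ → ℝ} {a b c : ℝ}
    (hcont : ContinuousOn ψ (Icc a b)) (hderiv : ∀ u ∈ Ioo a b, HasDerivAt ψ (-g u) u)
    (hc : ∀ u ∈ Ioo a b, c ≤ ψ u ^ 2 * g u) (hb : ψ b = 0) {t : ℝ} (ht : t ∈ Icc a b) :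
    3 * c * (b - t) ≤ ψ t ^ 3 := by
  have := antitoneOn_pow_three_add_mul hcont hderiv hc ht (right_mem_Icc.2 (ht.1.trans ht.2))
    ht.2
  simp only [hb] at this
  linarith

theorem one_div_sq_le_sq_mul_rpow_neg_half {x y K : ℝ} (hx : 0 < x) (hK : 0 < K)
    (h : x ^ ((1:ℝ)/4) ≤ K * y) : 1 / K ^ 2 ≤ y ^ 2 * x ^ (-(1:ℝ)/2) := by
  set r := x ^ ((1:ℝ)/4)
  have hr : 0 < r := by positivity
  have hx' : x ^ (-(1:ℝ)/2) = (r ^ 2)⁻¹ := by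
    rw [← Real.rpow_natCast, ← Real.rpow_mul hx.le, ← Real.rpow_neg hx.le]
    norm_num
  rw [hx', ← div_eq_mul_inv, div_le_div_iff₀ (by positivity) (by positivity), one_mul, ← mul_pow,
    mul_comm y]
  exact pow_le_pow_left₀ hr.le h 2

theorem integral_sub_rpow {r : ℝ} (hr : -1 < r) (s T : ℝ) :
    ∫ τ in s..T, (T - τ) ^ r = (T - s) ^ (r + 1) / (r + 1) := by
  rw [intervalIntegral.integral_comp_sub_left (fun x => x ^ r), sub_self,
    integral_rpow (Or.inl hr), Real.zero_rpow (by linarith), sub_zero]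

theorem intervalIntegrable_sub_rpow {r : ℝ} (hr : -1 < r) (s T : ℝ) :
    IntervalIntegrable (fun τ => (T - τ) ^ r) volume s T := by
  simpa using
    ((intervalIntegral.intervalIntegrable_rpow' hr (a := 0) (b := T - s)).comp_sub_left T).symm

theorem rpow_neg_half_le_of_mul_rpow_four_thirds_le {C x y : ℝ} (hC : 0 < C) (hx : 0 < x)
    (h : C * x ^ ((4:ℝ)/3) ≤ y) : y ^ (-(1:ℝ)/2) ≤ C ^ (-(1:ℝ)/2) * x ^ (-(2:ℝ)/3) :=
  calc y ^ (-(1:ℝ)/2) ≤ (C * x ^ ((4:ℝ)/3)) ^ (-(1:ℝ)/2) :=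
        Real.rpow_le_rpow_of_nonpos (by positivity) h (by norm_num)
    _ = C ^ (-(1:ℝ)/2) * x ^ (-(2:ℝ)/3) := by
        rw [Real.mul_rpow hC.le (by positivity), ← Real.rpow_mul hx.le]; norm_num

theorem setIntegral_rpow_neg_half_le {lam : ℝ → ℝ} {C s T : ℝ} (hC : 0 < C) (hsT : s ≤ T)
    (hlow : ∀ τ ∈ Ioo s T, C * (T - τ) ^ ((4:ℝ)/3) ≤ lam τ) :
    ∫ τ in Ioo s T, lam τ ^ (-(1:ℝ)/2) ≤ 3 * C ^ (-(1:ℝ)/2) * (T - s) ^ ((1:ℝ)/3) := by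
  have hr : (-1:ℝ) < -2/3 := by norm_num
  have hmaj : IntegrableOn (fun τ => C ^ (-(1:ℝ)/2) * (T - τ) ^ (-(2:ℝ)/3)) (Ioo s T) :=
    (intervalIntegrable_iff_integrableOn_Ioo_of_le hsT).1
      ((intervalIntegrable_sub_rpow hr s T).const_mul _)
  calc ∫ τ in Ioo s T, lam τ ^ (-(1:ℝ)/2)
      ≤ ∫ τ in Ioo s T, C ^ (-(1:ℝ)/2) * (T - τ) ^ (-(2:ℝ)/3) := by
        refine integral_mono_of_nonneg ?_ hmaj ?_ <;>
          refine (ae_restrict_iff' measurableSet_Ioo).2 (ae_of_all _ fun τ hτ => ?_)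
        · have : 0 < T - τ := sub_pos.2 hτ.2
          exact (Real.rpow_pos_of_pos ((by positivity : 0 < C * (T - τ) ^ ((4:ℝ)/3)).trans_le
            (hlow τ hτ)) _).le
        · exact rpow_neg_half_le_of_mul_rpow_four_thirds_le hC (sub_pos.2 hτ.2) (hlow τ hτ)
    _ = 3 * C ^ (-(1:ℝ)/2) * (T - s) ^ ((1:ℝ)/3) := by
        rw [← integral_Ioc_eq_integral_Ioo, ← intervalIntegral.integral_of_le hsT,
          intervalIntegral.integral_const_mul, integral_sub_rpow hr]
        norm_num
        ring

theorem rpow_one_third_le_of_le_pow_three {x y : ℝ} (hx : 0 ≤ x) (h : x ≤ y ^ 3) :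
    x ^ ((1:ℝ)/3) ≤ y := by
  have hy : 0 ≤ y := (Odd.pow_nonneg_iff (by decide)).1 (hx.trans h)
  rw [one_div, Real.rpow_inv_le_iff_of_pos hx hy (by norm_num)]
  exact_mod_cast h

theorem frequently_le_mul_rpow_four_thirds {lam : ℝ → ℝ} {t₀ T K : ℝ} (ht : t₀ < T) (hK : 0 < K)
    (hineq : ∀ t ∈ Ico t₀ T, lam t ^ ((1:ℝ)/4) ≤ K * ∫ τ in Ioo t T, lam τ ^ (-(1:ℝ)/2)) :
    ∃ᶠ u in 𝓝[<] T, u ∈ Ico t₀ T ∧ lam u ≤ (3 * K) ^ ((4:ℝ)/3) * (T - u) ^ ((4:ℝ)/3) := by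
  set C := (3 * K) ^ ((4:ℝ)/3) with hC
  have hCpos : 0 < C := by positivity
  -- `C` is chosen so that the upper and the lower bound on `λ(s)^{1/4}` below coincide.
  have hCK : 3 * K * C ^ (-(1:ℝ)/2) = C ^ ((1:ℝ)/4) := by
    rw [hC, ← Real.rpow_mul (by positivity), ← Real.rpow_mul (by positivity)]
    conv_lhs => enter [1]; rw [← Real.rpow_one (3 * K)]
    rw [← Real.rpow_add (by positivity)]
    norm_num
  by_contra hfreq
  obtain ⟨l, hlT, hl⟩ := (nhdsLT_basis T).eventually_iff.1 (not_frequently.1 hfreq)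
  obtain ⟨s, hls, hsT⟩ := exists_between (max_lt hlT ht)
  have hs : s ∈ Ico t₀ T := ⟨(le_max_right l t₀).trans hls.le, hsT⟩
  have hlow : ∀ τ ∈ Ico s T, C * (T - τ) ^ ((4:ℝ)/3) < lam τ := fun τ hτ =>
    not_le.1 fun h => hl ⟨(le_max_left l t₀).trans_lt (hls.trans_le hτ.1), hτ.2⟩
      ⟨⟨hs.1.trans hτ.1, hτ.2⟩, h⟩
  have hTs : 0 < T - s := sub_pos.2 hsT
  refine lt_irrefl (C ^ ((1:ℝ)/4) * (T - s) ^ ((1:ℝ)/3)) ?_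
  calc C ^ ((1:ℝ)/4) * (T - s) ^ ((1:ℝ)/3)
      = (C * (T - s) ^ ((4:ℝ)/3)) ^ ((1:ℝ)/4) := by
        rw [Real.mul_rpow hCpos.le (by positivity), ← Real.rpow_mul hTs.le]; norm_num
    _ < lam s ^ ((1:ℝ)/4) := Real.rpow_lt_rpow (by positivity) (hlow s ⟨le_rfl, hsT⟩) (by norm_num)
    _ ≤ K * ∫ τ in Ioo s T, lam τ ^ (-(1:ℝ)/2) := hineq s hs
    _ ≤ K * (3 * C ^ (-(1:ℝ)/2) * (T - s) ^ ((1:ℝ)/3)) :=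
        mul_le_mul_of_nonneg_left (setIntegral_rpow_neg_half_le hCpos hsT.le
          fun τ hτ => (hlow τ ⟨hτ.1.le, hτ.2⟩).le) hK.le
    _ = C ^ ((1:ℝ)/4) * (T - s) ^ ((1:ℝ)/3) := by rw [← hCK]; ring

/-- The integral inequality used in dimension `N = 3`: if `λ : [t₀,T) → (0,∞)` is continuous,
`∫_t^T λ^{−1/2} dτ < ∞` and `λ(t)^{1/4} ≤ K ∫_t^T λ(τ)^{−1/2} dτ` for all `t ∈ [t₀,T)`, then
`∫_t^T λ^{−1/2} dτ ≥ (3/K²)^{1/3}(T−t)^{1/3}` on `[t₀,T)`, and there are a constant `C`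
(depending only on `K`) and a sequence `tₙ → T` with `λ(tₙ) ≤ C (T−tₙ)^{4/3}`. -/
theorem sequential_blowup_rate_dimension_three
    (t₀ T K : ℝ) (ht : t₀ < T) (hK : 0 < K)
    (lam : ℝ → ℝ)
    (hcont : ContinuousOn lam (Ico t₀ T))
    (hpos : ∀ t ∈ Ico t₀ T, 0 < lam t)
    (hint : ∀ t ∈ Ico t₀ T, IntegrableOn (fun τ => (lam τ) ^ (-(1:ℝ)/2)) (Ioo t T) volume)
    (hineq : ∀ t ∈ Ico t₀ T,
      (lam t) ^ ((1:ℝ)/4) ≤ K * ∫ τ in Ioo t T, (lam τ) ^ (-(1:ℝ)/2)) :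
    (∀ t ∈ Ico t₀ T,
      (3 / K^2) ^ ((1:ℝ)/3) * (T - t) ^ ((1:ℝ)/3)
        ≤ ∫ τ in Ioo t T, (lam τ) ^ (-(1:ℝ)/2)) ∧
    ∃ C > 0, ∃ tseq : ℕ → ℝ, (∀ n, tseq n ∈ Ico t₀ T) ∧
      Tendsto tseq atTop (nhds T) ∧
      ∀ n, lam (tseq n) ≤ C * (T - tseq n) ^ ((4:ℝ)/3) := by
  set f : ℝ → ℝ := fun τ => lam τ ^ (-(1:ℝ)/2)
  have hIoo : ∀ t ≤ T, ∫ τ in Ioo t T, f τ = ∫ τ in t..T, f τ := fun t h => by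
    rw [intervalIntegral.integral_of_le h, integral_Ioc_eq_integral_Ioo]
  have hf_int : IntegrableOn f (uIcc t₀ T) := by
    rw [uIcc_of_le ht.le, integrableOn_Icc_iff_integrableOn_Ioo]
    exact hint t₀ ⟨le_rfl, ht⟩
  have hf_cont : ContinuousOn f (Ioo t₀ T) := (hcont.mono Ioo_subset_Ico_self).rpow_const
    fun x hx => Or.inl (hpos x (Ioo_subset_Ico_self hx)).ne'
  have hcube : ∀ t ∈ Icc t₀ T, 3 * (1 / K ^ 2) * (T - t) ≤ (∫ τ in t..T, f τ) ^ 3 := by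
    refine fun t htmem => mul_sub_le_pow_three (ψ := fun t => ∫ τ in t..T, f τ) (g := f) ?_
      (fun u hu => ?_) (fun u hu => ?_) intervalIntegral.integral_same htmem
    · simpa only [uIcc_of_le ht.le] using
        intervalIntegral.continuousOn_primitive_interval_left hf_int
    · exact intervalIntegral.integral_hasDerivAt_left
        (hf_int.intervalIntegrable.mono_set
          (uIcc_subset_uIcc (mem_uIcc_of_le hu.1.le hu.2.le) right_mem_uIcc))
        (hf_cont.stronglyMeasurableAtFilter isOpen_Ioo u hu)
        (hf_cont.continuousAt (isOpen_Ioo.mem_nhds hu))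
    · have hu' : u ∈ Ico t₀ T := Ioo_subset_Ico_self hu
      rw [← hIoo u hu.2.le]
      exact one_div_sq_le_sq_mul_rpow_neg_half (hpos u hu') hK (hineq u hu')
  refine ⟨fun t ht' => ?_, ?_⟩
  · rw [← Real.mul_rpow (by positivity) (sub_nonneg.2 ht'.2.le), hIoo t ht'.2.le]
    exact rpow_one_third_le_of_le_pow_three (by have := ht'.2; positivity)
      (by simpa only [mul_one_div] using hcube t (Ico_subset_Icc_self ht'))
  · obtain ⟨tseq, hlim, hseq⟩ :=
      frequently_iff_seq_forall.1 (frequently_le_mul_rpow_four_thirds ht hK hineq)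
    exact ⟨_, by positivity, tseq, fun n => (hseq n).1, (tendsto_nhdsWithin_iff.1 hlim).1,
      fun n => (hseq n).2⟩
end

section
/- Let t₀ < T ∈ ℝ, ν > 0, let λ : [t₀, T) → (0, +∞) be continuous with ∫_{t₀}^{T} dτ/λ(τ) = +∞, let M : [t₀, T) → [0, +∞) be nonincreasing, and let a : [t₀, T) → ℝ be a bounded continuously differentiable function satisfying |a'(t) − (ν/λ(t))·a(t)| ≤ (ν/(2λ(t)))·M(t) for every t ∈ [t₀, T). Then |a(t)| ≤ M(t) for every t ∈ [t₀, T). -/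
open Set Filter MeasureTheory

private lemma aux_one_sided
    (t₀ T ν : ℝ) (ht : t₀ < T) (hν : 0 < ν)
    (lam M a a' : ℝ → ℝ)
    (hlamcont : ContinuousOn lam (Ico t₀ T))
    (hlampos : ∀ t ∈ Ico t₀ T, 0 < lam t)
    (hdiv : ∫⁻ τ in Ico t₀ T, ENNReal.ofReal (lam τ)⁻¹ = ⊤)
    (hMmono : AntitoneOn M (Ico t₀ T))
    (hMnonneg : ∀ t ∈ Ico t₀ T, 0 ≤ M t)
    (habdd : ∃ A : ℝ, ∀ t ∈ Ico t₀ T, |a t| ≤ A)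
    (haderiv : ∀ t ∈ Ico t₀ T, HasDerivAt a (a' t) t)
    (haineq : ∀ t ∈ Ico t₀ T,
      |a' t - (ν / lam t) * a t| ≤ (ν / (2 * lam t)) * M t) :
    ∀ t ∈ Ico t₀ T, a t ≤ M t := by
  by_contra hcon
  push_neg at hcon
  obtain ⟨s, hs, hMs⟩ := hcon
  have hsT : s < T := hs.2
  have hts : t₀ ≤ s := hs.1
  have has : 0 < a s := lt_of_le_of_lt (hMnonneg s hs) hMs
  have hacont : ∀ x ∈ Ico t₀ T, ContinuousAt a x := fun x hx => (haderiv x hx).continuousAt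
  have hlaminv : ContinuousOn (fun τ => (lam τ)⁻¹) (Ico t₀ T) :=
    hlamcont.inv₀ fun x hx => (hlampos x hx).ne'
  -- key differential inequality on points above `M s`
  have hkey : ∀ t ∈ Ico t₀ T, M s < a t → s ≤ t → ν / (2 * lam t) * a t ≤ a' t := by
    intro t htmem hlt hst
    have hMt : M t ≤ M s := hMmono hs htmem hst
    have hl := hlampos t htmem
    have h1 := (abs_le.1 (haineq t htmem)).1
    have hMa : M t ≤ a t := le_of_lt (lt_of_le_of_lt hMt hlt)
    have hrw : ν / lam t = 2 * (ν / (2 * lam t)) := by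
      field_simp
    have h2 : ν / lam t * a t - ν / (2 * lam t) * M t ≤ a' t := by linarith
    rw [hrw] at h2
    have hc : 0 < ν / (2 * lam t) := div_pos hν (by linarith)
    nlinarith [mul_le_mul_of_nonneg_left hMa hc.le]
  -- Step A : `a` stays above `M s` on `[s, T)`
  have hstepA : ∀ t ∈ Ico s T, M s < a t := by
    by_contra hA
    push_neg at hA
    obtain ⟨t₁, ht₁, hat₁⟩ := hA
    have hsub1 : Icc s t₁ ⊆ Ico t₀ T := fun x hx =>
      ⟨le_trans hts hx.1, lt_of_le_of_lt hx.2 ht₁.2⟩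
    have hconta : ContinuousOn a (Icc s t₁) := fun x hx =>
      (hacont x (hsub1 hx)).continuousWithinAt
    have hKclosed : IsClosed (Icc s t₁ ∩ a ⁻¹' Iic (M s)) :=
      hconta.preimage_isClosed_of_isClosed isClosed_Icc isClosed_Iic
    have hKne : (Icc s t₁ ∩ a ⁻¹' Iic (M s)).Nonempty :=
      ⟨t₁, ⟨⟨ht₁.1, le_refl _⟩, hat₁⟩⟩
    have hKbdd : BddBelow (Icc s t₁ ∩ a ⁻¹' Iic (M s)) := ⟨s, fun x hx => hx.1.1⟩
    set u := sInf (Icc s t₁ ∩ a ⁻¹' Iic (M s)) with hu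
    have huK : u ∈ Icc s t₁ ∩ a ⁻¹' Iic (M s) := hKclosed.csInf_mem hKne hKbdd
    have hsu : s < u := by
      rcases lt_or_eq_of_le huK.1.1 with h | h
      · exact h
      · exact absurd (h ▸ huK.2) (not_le.2 hMs)
    have hnotK : ∀ x ∈ Ico s u, M s < a x := by
      intro x hx
      by_contra hxx
      push_neg at hxx
      have hxK : x ∈ Icc s t₁ ∩ a ⁻¹' Iic (M s) :=
        ⟨⟨hx.1, le_trans hx.2.le huK.1.2⟩, hxx⟩
      exact absurd (csInf_le hKbdd hxK) (not_le.2 hx.2)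
    have hmono : StrictMonoOn a (Icc s u) := by
      apply strictMonoOn_of_deriv_pos (convex_Icc s u)
      · exact hconta.mono (Icc_subset_Icc_right huK.1.2)
      · intro x hx
        rw [interior_Icc] at hx
        have hxm : x ∈ Ico t₀ T := hsub1 ⟨hx.1.le, hx.2.le.trans huK.1.2⟩
        rw [(haderiv x hxm).deriv]
        have hax : M s < a x := hnotK x ⟨hx.1.le, hx.2⟩
        have hax0 : 0 < a x := lt_of_le_of_lt (hMnonneg s hs) hax
        have hc : 0 < ν / (2 * lam x) := div_pos hν (by linarith [hlampos x hxm])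
        calc (0:ℝ) < ν / (2 * lam x) * a x := mul_pos hc hax0
          _ ≤ a' x := hkey x hxm hax hx.1.le
    have hlt := hmono (left_mem_Icc.2 huK.1.1) (right_mem_Icc.2 huK.1.1) hsu
    have : a u ≤ M s := huK.2
    linarith
  -- the primitive of `1/lam` starting at `s`
  set I : ℝ → ℝ := fun x => ∫ τ in s..x, (lam τ)⁻¹ with hI
  -- Step B : exponential growth
  have hgrow : ∀ x ∈ Ico s T, a s * Real.exp (ν / 2 * I x) ≤ a x := by
    intro x hx
    rcases eq_or_lt_of_le hx.1 with h | hsx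
    · rw [← h]
      simp [hI, intervalIntegral.integral_same]
    · have hsubIcc : Icc s x ⊆ Ico t₀ T := fun y hy =>
        ⟨le_trans hts hy.1, lt_of_le_of_lt hy.2 hx.2⟩
      have hint : IntegrableOn (fun τ => (lam τ)⁻¹) (Icc s x) :=
        (hlaminv.mono hsubIcc).integrableOn_compact isCompact_Icc
      have hIcont : ContinuousOn I (Icc s x) := by
        have := intervalIntegral.continuousOn_primitive_interval
          (a := s) (b := x) (μ := volume) (f := fun τ => (lam τ)⁻¹)
          (by rwa [uIcc_of_le hsx.le])
        rwa [uIcc_of_le hsx.le] at this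
      -- monotonicity of `h t = a t * exp (-(ν/2) I t)`
      have hmono : MonotoneOn (fun t => a t * Real.exp (-(ν / 2) * I t)) (Icc s x) := by
        have hIder : ∀ y ∈ Ioo s x, HasDerivAt I (lam y)⁻¹ y := by
          intro y hy
          have hym : y ∈ Ioo t₀ T := ⟨lt_of_le_of_lt hts hy.1, lt_trans hy.2 hx.2⟩
          have hii : IntervalIntegrable (fun τ => (lam τ)⁻¹) volume s y := by
            apply ContinuousOn.intervalIntegrable
            rw [uIcc_of_le hy.1.le]
            exact hlaminv.mono fun z hz =>
              ⟨le_trans hts hz.1, lt_of_le_of_lt hz.2 (lt_trans hy.2 hx.2)⟩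
          exact intervalIntegral.integral_hasDerivAt_right hii
            (ContinuousOn.stronglyMeasurableAtFilter isOpen_Ioo
              (hlaminv.mono Ioo_subset_Ico_self) y hym)
            ((hlaminv.mono Ioo_subset_Ico_self).continuousAt (Ioo_mem_nhds hym.1 hym.2))
        have hhder : ∀ y ∈ Ioo s x,
            HasDerivAt (fun t => a t * Real.exp (-(ν / 2) * I t))
              (a' y * Real.exp (-(ν / 2) * I y) +
                a y * (Real.exp (-(ν / 2) * I y) * (-(ν / 2) * (lam y)⁻¹))) y := by
          intro y hy
          have hym : y ∈ Ico t₀ T := ⟨le_trans hts hy.1.le, lt_trans hy.2 hx.2⟩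
          exact ((haderiv y hym).mul (((hIder y hy).const_mul (-(ν / 2))).exp))
        apply monotoneOn_of_deriv_nonneg (convex_Icc s x)
        · exact ContinuousOn.mul
            (fun y hy => (hacont y (hsubIcc hy)).continuousWithinAt)
            ((hIcont.const_smul (-(ν / 2))).rexp)
        · intro y hy
          rw [interior_Icc] at hy
          exact ((hhder y hy).differentiableAt).differentiableWithinAt
        · intro y hy
          rw [interior_Icc] at hy
          rw [(hhder y hy).deriv]
          have hym : y ∈ Ico t₀ T := ⟨le_trans hts hy.1.le, lt_trans hy.2 hx.2⟩
          have hl := hlampos y hym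
          have hc : ν / (2 * lam y) = ν / 2 * (lam y)⁻¹ := by
            rw [div_mul_eq_div_div, div_eq_mul_inv]
          have hax : M s < a y := hstepA y ⟨hy.1.le, lt_trans hy.2 hx.2⟩
          have hkd : ν / 2 * (lam y)⁻¹ * a y ≤ a' y := by
            rw [← hc]; exact hkey y hym hax hy.1.le
          have hE : (0:ℝ) < Real.exp (-(ν / 2) * I y) := Real.exp_pos _
          nlinarith [mul_nonneg hE.le (sub_nonneg.2 hkd)]
      have hm := hmono (left_mem_Icc.2 hsx.le) (right_mem_Icc.2 hsx.le) hsx.le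
      simp only [hI, intervalIntegral.integral_same, mul_zero, Real.exp_zero, mul_one] at hm
      rw [← le_div_iff₀ (Real.exp_pos _)]
      rw [div_eq_mul_inv, ← Real.exp_neg]
      simpa [neg_mul] using hm
  -- Step C : `I` is unbounded on `[s, T)`
  have hIunbdd : ∀ C : ℝ, ∃ x ∈ Ico s T, C ≤ I x := by
    by_contra hC
    push_neg at hC
    obtain ⟨C, hC⟩ := hC
    refine absurd hdiv ?_
    have hsplit : Ico t₀ T = Ico t₀ s ∪ Ico s T := (Ico_union_Ico_eq_Ico hts hsT.le).symm
    rw [hsplit, lintegral_union measurableSet_Ico (Ico_disjoint_Ico_same)]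
    have h1 : ∫⁻ τ in Ico t₀ s, ENNReal.ofReal (lam τ)⁻¹ < ⊤ := by
      have hsub : Icc t₀ s ⊆ Ico t₀ T := fun y hy => ⟨hy.1, lt_of_le_of_lt hy.2 hsT⟩
      obtain ⟨K, hK⟩ := (isCompact_Icc.image_of_continuousOn (hlaminv.mono hsub)).bddAbove
      calc ∫⁻ τ in Ico t₀ s, ENNReal.ofReal (lam τ)⁻¹
          ≤ ∫⁻ _ in Ico t₀ s, ENNReal.ofReal K :=
            setLIntegral_mono' measurableSet_Ico fun τ hτ =>
              ENNReal.ofReal_le_ofReal (hK ⟨τ, ⟨hτ.1, hτ.2.le⟩, rfl⟩)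
        _ = ENNReal.ofReal K * volume (Ico t₀ s) := setLIntegral_const _ _
        _ < ⊤ := ENNReal.mul_lt_top ENNReal.ofReal_lt_top
            (by rw [Real.volume_Ico]; exact ENNReal.ofReal_lt_top)
    have h2 : ∫⁻ τ in Ico s T, ENNReal.ofReal (lam τ)⁻¹ < ⊤ := by
      have hsub : Ico s T ⊆ Ico t₀ T := Ico_subset_Ico_left hts
      have hfae : AEMeasurable (fun τ => ENNReal.ofReal (lam τ)⁻¹)
          (volume.restrict (Ico s T)) :=
        ENNReal.measurable_ofReal.comp_aemeasurable
          ((hlaminv.mono hsub).aemeasurable measurableSet_Ico)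
      set g := hfae.mk _ with hg
      have hfg : (fun τ => ENNReal.ofReal (lam τ)⁻¹) =ᵐ[volume.restrict (Ico s T)] g :=
        hfae.ae_eq_mk
      set ρ := (volume.restrict (Ico s T)).withDensity g with hρ
      have hρE : ∀ E : Set ℝ, MeasurableSet E → E ⊆ Ico s T →
          ρ E = ∫⁻ τ in E, ENNReal.ofReal (lam τ)⁻¹ := by
        intro E hE hEsub
        rw [hρ, withDensity_apply _ hE,
          lintegral_congr_ae (ae_restrict_of_ae hfg.symm : _),
          Measure.restrict_restrict hE, inter_eq_self_of_subset_left hEsub]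
      set u : ℕ → ℝ := fun n => T - (T - s) / (n + 1) with hudef
      have hTs : (0:ℝ) < T - s := by linarith
      have hu_lt : ∀ n : ℕ, u n < T := by
        intro n
        have : (0:ℝ) < (T - s) / (n + 1) := by positivity
        simp only [hudef]; linarith
      have hu_ge : ∀ n : ℕ, s ≤ u n := by
        intro n
        have h1 : (T - s) / ((n:ℝ) + 1) ≤ (T - s) / 1 := by
          apply div_le_div_of_nonneg_left hTs.le one_pos
          exact_mod_cast Nat.le_add_left 1 n
        simp only [hudef]
        have : (T - s) / 1 = T - s := by ring
        linarith [h1.trans_eq this]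
      have hsets : Monotone fun n : ℕ => Ico s (u n) := by
        intro m n hmn
        apply Ico_subset_Ico_right
        simp only [hudef]
        have hm1 : (0:ℝ) < (m:ℝ) + 1 := by positivity
        have hle : (m:ℝ) + 1 ≤ (n:ℝ) + 1 := by exact_mod_cast Nat.succ_le_succ hmn
        have := div_le_div_of_nonneg_left hTs.le hm1 hle
        linarith
      have hUnion : Ico s T = ⋃ n, Ico s (u n) := by
        apply Subset.antisymm
        · intro x hx
          have hTx : (0:ℝ) < T - x := by linarith [hx.2]
          obtain ⟨n, hn⟩ := exists_nat_gt ((T - s) / (T - x))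
          refine mem_iUnion.2 ⟨n, hx.1, ?_⟩
          have h1 : T - s < (T - x) * n := by
            rw [div_lt_iff₀ hTx] at hn; linarith [hn]
          have hn1 : (0:ℝ) < (n:ℝ) + 1 := by positivity
          have h2 : (T - s) / ((n:ℝ) + 1) < T - x := by
            rw [div_lt_iff₀ hn1]
            nlinarith
          simp only [hudef]; linarith
        · exact iUnion_subset fun n => Ico_subset_Ico_right (hu_lt n).le
      calc ∫⁻ τ in Ico s T, ENNReal.ofReal (lam τ)⁻¹
          = ρ (Ico s T) := (hρE _ measurableSet_Ico (subset_refl _)).symm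
        _ = ρ (⋃ n, Ico s (u n)) := by rw [← hUnion]
        _ = ⨆ n, ρ (Ico s (u n)) := (hsets.directed_le).measure_iUnion
        _ ≤ ENNReal.ofReal C := by
            apply iSup_le
            intro n
            rw [hρE _ measurableSet_Ico
              (fun y hy => ⟨hy.1, lt_of_lt_of_le hy.2 (hu_lt n).le⟩)]
            have hsubIcc : Icc s (u n) ⊆ Ico t₀ T := fun y hy =>
              ⟨le_trans hts hy.1, lt_of_le_of_lt hy.2 (hu_lt n)⟩
            have hintn : IntegrableOn (fun τ => (lam τ)⁻¹) (Ico s (u n)) :=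
              ((hlaminv.mono hsubIcc).integrableOn_compact isCompact_Icc).mono_set
                Ico_subset_Icc_self
            have hnn : 0 ≤ᵐ[volume.restrict (Ico s (u n))] fun τ => (lam τ)⁻¹ :=
              (ae_restrict_iff' measurableSet_Ico).2 (ae_of_all _ fun τ hτ =>
                inv_nonneg.2 (hlampos τ (hsubIcc ⟨hτ.1, hτ.2.le⟩)).le)
            rw [← ofReal_integral_eq_lintegral_ofReal hintn hnn]
            apply ENNReal.ofReal_le_ofReal
            have heq : ∫ τ in Ico s (u n), (lam τ)⁻¹ = I (u n) := by
              rw [show I (u n) = ∫ τ in s..(u n), (lam τ)⁻¹ from rfl,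
                intervalIntegral.integral_of_le (hu_ge n),
                Measure.restrict_congr_set Ico_ae_eq_Ioc]
            rw [heq]
            exact (hC (u n) ⟨hu_ge n, hu_lt n⟩).le
        _ < ⊤ := ENNReal.ofReal_lt_top
    exact (ENNReal.add_lt_top.2 ⟨h1, h2⟩).ne
  -- Step D : contradiction with boundedness
  obtain ⟨A, hA⟩ := habdd
  have hApos : 0 < A := lt_of_lt_of_le has (le_trans (le_abs_self _) (hA s hs))
  obtain ⟨x, hx, hCx⟩ := hIunbdd (2 / ν * Real.log (A / a s + 1))
  have hax := hgrow x hx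
  have hxm : x ∈ Ico t₀ T := ⟨le_trans hts hx.1, hx.2⟩
  have hexp : A / a s + 1 ≤ Real.exp (ν / 2 * I x) := by
    have h1 : Real.log (A / a s + 1) ≤ ν / 2 * I x := by
      have heq : ν / 2 * (2 / ν * Real.log (A / a s + 1)) = Real.log (A / a s + 1) := by
        field_simp
      calc Real.log (A / a s + 1)
          = ν / 2 * (2 / ν * Real.log (A / a s + 1)) := heq.symm
        _ ≤ ν / 2 * I x := by
            apply mul_le_mul_of_nonneg_left hCx (by positivity)
    calc A / a s + 1 = Real.exp (Real.log (A / a s + 1)) :=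
          (Real.exp_log (by positivity)).symm
      _ ≤ Real.exp (ν / 2 * I x) := Real.exp_le_exp.2 h1
  have h2 : a s * (A / a s + 1) ≤ a s * Real.exp (ν / 2 * I x) :=
    mul_le_mul_of_nonneg_left hexp has.le
  have h3 : a s * (A / a s + 1) = A + a s := by
    field_simp
  have h4 := hA x hxm
  have h5 := le_abs_self (a x)
  linarith

/-- Control of the unstable mode: if `λ : [t₀,T) → (0,∞)` is continuous with divergent
rescaled time `∫_{t₀}^T dτ/λ(τ) = +∞`, `M : [t₀,T) → [0,∞)` is nonincreasing, and
`a : [t₀,T) → ℝ` is bounded, `C¹`, and satisfies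
`|a'(t) − (ν/λ(t)) a(t)| ≤ (ν/(2λ(t))) M(t)` on `[t₀,T)` with `ν > 0`, then `|a(t)| ≤ M(t)`
on `[t₀,T)`. -/
theorem unstable_mode_dominated_by_error
    (t₀ T ν : ℝ) (ht : t₀ < T) (hν : 0 < ν)
    (lam M a a' : ℝ → ℝ)
    (hlamcont : ContinuousOn lam (Ico t₀ T))
    (hlampos : ∀ t ∈ Ico t₀ T, 0 < lam t)
    (hdiv : ∫⁻ τ in Ico t₀ T, ENNReal.ofReal (lam τ)⁻¹ = ⊤)
    (hMmono : AntitoneOn M (Ico t₀ T))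
    (hMnonneg : ∀ t ∈ Ico t₀ T, 0 ≤ M t)
    (habdd : ∃ A : ℝ, ∀ t ∈ Ico t₀ T, |a t| ≤ A)
    (haderiv : ∀ t ∈ Ico t₀ T, HasDerivAt a (a' t) t)
    (hadercont : ContinuousOn a' (Ico t₀ T))
    (haineq : ∀ t ∈ Ico t₀ T,
      |a' t - (ν / lam t) * a t| ≤ (ν / (2 * lam t)) * M t) :
    ∀ t ∈ Ico t₀ T, |a t| ≤ M t := by
  intro t htmem
  rw [abs_le]
  constructor
  · have hneg := aux_one_sided t₀ T ν ht hν lam M (fun x => -a x) (fun x => -a' x)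
      hlamcont hlampos hdiv hMmono hMnonneg
      (habdd.imp fun A hA => fun x hx => by simpa [abs_neg] using hA x hx)
      (fun x hx => (haderiv x hx).neg)
      (fun x hx => by
        have heq : -a' x - ν / lam x * -a x = -(a' x - ν / lam x * a x) := by ring
        rw [heq, abs_neg]
        exact haineq x hx)
      t htmem
    linarith [show -a t ≤ M t from hneg]
  · exact aux_one_sided t₀ T ν ht hν lam M a a' hlamcont hlampos hdiv hMmono hMnonneg
      habdd haderiv haineq t htmem
end
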